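/- arXiv:2202.08097 — 5 statements merged into one kernel-verified Lean document; each statement's English description precedes it below -/
import Mathlib

section
/- For any n-agent instance with monotone valuations, for any integer c with 1 ≤ c ≤ n, and any optimal action sequence π̃, the following holds: let S̃ be the subsequence of π̃ consisting of the c agents with the c highest values v_i(π̃^i). Then any action subsequence S of length c maximizing ∑_{i∈S} v_i(S^i) over all c-agent subsequences satisfies ∑_{i∈S} v_i(S^i) ≥ (c/n)·SW(π̃). Consequently, any full sequence π extending S as a prefix has SW(π) ≥ (c/n)·SW(π̃), so the algorithm Det achieves approximation ratio n/c. -/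
/-!
Let `f i = v_i(π̃^i)` and let `A` be a set of `c` agents maximising `∑_{i ∈ A} f i`. Exchanging an
agent of `A` for one outside cannot increase the sum, so every agent of `A` beats every agent
outside it, and averaging gives `∑_{i ∈ A} f i ≥ (c/n) SW(π̃)`. Listing `A` in the order of `π̃`
gives a subsequence `T` in which each agent is preceded by fewer agents than in `π̃`, so by
monotonicity `valSum T ≥ ∑_{i ∈ A} f i`, and `valSum S ≥ valSum T` by maximality of `S`. Finally,
agents of a prefix `S` of `π` see the same predecessors in `S` as in `π`, and the remaining agents
contribute nonnegative values.
-/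

/-- The agents that precede `i` in the action (sub)sequence `π`. -/
def prefixBefore {n : ℕ} (π : List (Fin n)) (i : Fin n) : List (Fin n) :=
  π.takeWhile (fun j => j != i)

/-- A full action sequence: an ordering of all `n` agents. -/
def IsSeq {n : ℕ} (π : List (Fin n)) : Prop :=
  π.Nodup ∧ ∀ i : Fin n, i ∈ π

/-- Social welfare of a full action sequence. -/
noncomputable def SW {n : ℕ} (v : Fin n → List (Fin n) → ℝ) (π : List (Fin n)) : ℝ :=
  ∑ i : Fin n, v i (prefixBefore π i)

/-- Total value obtained by the agents of a subsequence acting in order. -/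
noncomputable def valSum {n : ℕ} (v : Fin n → List (Fin n) → ℝ) (S : List (Fin n)) : ℝ :=
  (S.map fun i => v i (prefixBefore S i)).sum

open Finset

section TopSubset

variable {ι : Type*} [Fintype ι] [DecidableEq ι] (f : ι → ℝ)

lemma le_of_forall_sum_powersetCard_le {A : Finset ι}
    (hA : ∀ B ∈ univ.powersetCard A.card, ∑ k ∈ B, f k ≤ ∑ k ∈ A, f k)
    {i j : ι} (hi : i ∉ A) (hj : j ∈ A) : f i ≤ f j := by
  have hi' : i ∉ A.erase j := fun h => hi (mem_of_mem_erase h)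
  have hcard : (insert i (A.erase j)).card = A.card := by
    rw [card_insert_of_notMem hi', card_erase_add_one hj]
  have hle : ∑ k ∈ insert i (A.erase j), f k ≤ ∑ k ∈ A, f k :=
    hA _ (mem_powersetCard.mpr ⟨subset_univ _, hcard⟩)
  rw [sum_insert hi', ← sum_erase_add A f hj] at hle
  linarith

lemma card_mul_sum_le_of_forall_le {A : Finset ι} (hA : ∀ i ∉ A, ∀ j ∈ A, f i ≤ f j) :
    (A.card : ℝ) * ∑ i, f i ≤ Fintype.card ι * ∑ i ∈ A, f i := by
  have hcompl : (A.card : ℝ) * ∑ i ∈ Aᶜ, f i ≤ Aᶜ.card * ∑ i ∈ A, f i := by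
    simp only [mul_sum, ← nsmul_eq_mul, ← sum_const]
    rw [sum_comm]
    exact sum_le_sum fun j hj => sum_le_sum fun i hi => hA i (mem_compl.mp hi) j hj
  have hcard : (Aᶜ.card : ℝ) = Fintype.card ι - A.card := by
    rw [card_compl, Nat.cast_sub (card_le_univ A)]
  rw [hcard] at hcompl
  rw [← sum_add_sum_compl A f]
  linarith

lemma exists_card_eq_card_mul_sum_le {c : ℕ} (hc : c ≤ Fintype.card ι) :
    ∃ A : Finset ι, A.card = c ∧ (c : ℝ) * ∑ i, f i ≤ Fintype.card ι * ∑ i ∈ A, f i := by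
  have hne : (univ.powersetCard c : Finset (Finset ι)).Nonempty :=
    powersetCard_nonempty.mpr (by simpa using hc)
  obtain ⟨A, hA, hAmax⟩ := exists_max_image _ (fun B => ∑ k ∈ B, f k) hne
  have hAcard : A.card = c := (mem_powersetCard.mp hA).2
  refine ⟨A, hAcard, hAcard ▸ card_mul_sum_le_of_forall_le f fun i hi j hj => ?_⟩
  exact le_of_forall_sum_powersetCard_le f (hAcard ▸ hAmax) hi hj

end TopSubset

section Prefixes

variable {n : ℕ}

lemma prefixBefore_sublist_of_sublist {S π : List (Fin n)} (h : S.Sublist π) (hπ : π.Nodup)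
    {i : Fin n} (hi : i ∈ S) : (prefixBefore S i).Sublist (prefixBefore π i) := by
  unfold prefixBefore
  induction h with
  | slnil => simp at hi
  | @cons S π a h ih =>
    have hai : a ≠ i := fun hai => (List.nodup_cons.mp hπ).1 (hai ▸ h.subset hi)
    simp only [List.takeWhile_cons, bne_iff_ne, ne_eq, hai, not_false_eq_true, if_true]
    exact (ih (List.nodup_cons.mp hπ).2 hi).cons a
  | @cons_cons S π a h ih =>
    by_cases hai : a = i
    · simp [hai]
    · have hiS : i ∈ S := (List.mem_cons.mp hi).resolve_left (Ne.symm hai)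
      simp only [List.takeWhile_cons, bne_iff_ne, ne_eq, hai, not_false_eq_true, if_true]
      exact (ih (List.nodup_cons.mp hπ).2 hiS).cons_cons a

lemma prefixBefore_append_of_mem {S : List (Fin n)} (t : List (Fin n)) {i : Fin n} (hi : i ∈ S) :
    prefixBefore (S ++ t) i = prefixBefore S i := by
  unfold prefixBefore
  rw [List.takeWhile_append, if_neg]
  intro hlen
  have hall := List.takeWhile_eq_self_iff.mp (List.takeWhile_prefix _ |>.eq_of_length hlen)
  simpa using hall i hi

variable (v : Fin n → List (Fin n) → ℝ)

lemma sum_prefixBefore_le_valSum_of_sublist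
    (hmono : ∀ (i : Fin n) (S S' : List (Fin n)), S'.Sublist S → v i S ≤ v i S')
    {T π : List (Fin n)} (hT : T.Sublist π) (hπ : π.Nodup) :
    (T.map fun i => v i (prefixBefore π i)).sum ≤ valSum v T :=
  List.sum_le_sum fun i hi => hmono i _ _ (prefixBefore_sublist_of_sublist hT hπ hi)

lemma valSum_le_SW_of_prefix (hnn : ∀ i S, 0 ≤ v i S) {S π : List (Fin n)} (hS : S.Nodup)
    (hSπ : S <+: π) : valSum v S ≤ SW v π := by
  obtain ⟨t, rfl⟩ := hSπ
  calc valSum v S = ∑ i ∈ S.toFinset, v i (prefixBefore (S ++ t) i) := by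
        rw [valSum, List.sum_toFinset _ hS]
        exact congrArg List.sum (List.map_congr_left fun i hi =>
          by rw [prefixBefore_append_of_mem t hi])
    _ ≤ SW v (S ++ t) :=
        sum_le_sum_of_subset_of_nonneg (subset_univ _) fun i _ _ => hnn _ _

end Prefixes

theorem stmt0_general {n c : ℕ} (hc1 : 1 ≤ c) (hcn : c ≤ n)
    (v : Fin n → List (Fin n) → ℝ)
    (hnn : ∀ i S, 0 ≤ v i S)
    (hmono : ∀ (i : Fin n) (S S' : List (Fin n)), S'.Sublist S → v i S ≤ v i S')
    (πopt : List (Fin n)) (hseq : IsSeq πopt)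
    (S : List (Fin n)) (hSnd : S.Nodup)
    (hmax : ∀ T : List (Fin n), T.Nodup → T.length = c → valSum v T ≤ valSum v S) :
    (c : ℝ) / n * SW v πopt ≤ valSum v S ∧
      ∀ π, IsSeq π → S <+: π → (c : ℝ) / n * SW v πopt ≤ SW v π := by
  set f : Fin n → ℝ := fun i => v i (prefixBefore πopt i)
  obtain ⟨A, hAcard, hAsum⟩ :=
    exists_card_eq_card_mul_sum_le f (c := c) (by simpa using hcn)
  set T := πopt.filter (· ∈ A)
  have hTsub : T.Sublist πopt := List.filter_sublist
  have hTnd : T.Nodup := hseq.1.sublist hTsub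
  have hTA : T.toFinset = A := by ext i; simp [T, hseq.2 i]
  have hTlen : T.length = c := by rw [← List.toFinset_card_of_nodup hTnd, hTA, hAcard]
  have hAT : ∑ i ∈ A, f i ≤ valSum v T := by
    rw [← hTA, List.sum_toFinset f hTnd]
    exact sum_prefixBefore_le_valSum_of_sublist v hmono hTsub hseq.1
  have hmain : (c : ℝ) / n * SW v πopt ≤ valSum v S := by
    have hn : (0 : ℝ) < n := by exact_mod_cast hc1.trans hcn
    rw [div_mul_eq_mul_div, div_le_iff₀ hn]
    calc (c : ℝ) * SW v πopt = c * ∑ i, f i := rfl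
      _ ≤ n * ∑ i ∈ A, f i := by simpa using hAsum
      _ ≤ n * valSum v S := by gcongr; exact hAT.trans (hmax T hTnd hTlen)
      _ = valSum v S * n := mul_comm _ _
  exact ⟨hmain, fun π _ hSπ => hmain.trans (valSum_le_SW_of_prefix v hnn hSnd hSπ)⟩

/-- the Det algorithm achieves an `n/c` approximation. -/
theorem stmt0 {n c : ℕ} (hc1 : 1 ≤ c) (hcn : c ≤ n)
    (v : Fin n → List (Fin n) → ℝ)
    (hnn : ∀ i S, 0 ≤ v i S)
    (hmono : ∀ (i : Fin n) (S S' : List (Fin n)), S'.Sublist S → v i S ≤ v i S')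
    (πopt : List (Fin n)) (hseq : IsSeq πopt)
    (hopt : ∀ σ, IsSeq σ → SW v σ ≤ SW v πopt)
    (S : List (Fin n)) (hSnd : S.Nodup) (hSlen : S.length = c)
    (hmax : ∀ T : List (Fin n), T.Nodup → T.length = c → valSum v T ≤ valSum v S) :
    (c : ℝ) / n * SW v πopt ≤ valSum v S ∧
      ∀ π, IsSeq π → S <+: π → (c : ℝ) / n * SW v πopt ≤ SW v π :=
  stmt0_general hc1 hcn v hnn hmono πopt hseq S hSnd hmax
end

section
/- In the bipartite matching valuation structure (OSM), valuations are monotone: for every agent i and action subsequences S, Ŝ of other agents with Ŝ ≤ S, the set of items picked under Ŝ is a subset of the set picked under S (μ(Ŝ) ⊆ μ(S)), and hence v_i(Ŝ) ≥ v_i(S). -/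
/-!
Greedy picking is monotone in the set of items already taken: if `A ⊆ B` and an agent picks `x`
from the complement of `A` and `y` from that of `B`, then `y` was available in both situations
while `x` was available after `B` unless it lies in `B`, so either `x ∈ B` or `x = y`.
Inducting along `S` from the right, this gives `μset Shat ⊆ μset S` for every sublist `Shat`
of `S`; then agent `i` picks from a superset of what is left after `Shat`, so her pick after
`Shat` has rank at most that of her pick after `S`, and hence at least its weight.
-/

open Function

variable {α β γ ι : Type*} [LinearOrder β]

def IsMinRankAvailable (r : α → β) (A : Finset α) (x : α) : Prop :=
  x ∉ A ∧ ∀ j, j ∉ A → r x ≤ r j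

namespace IsMinRankAvailable

variable {r : α → β} {A B : Finset α} {x y : α}

theorem rank_le_of_subset (hx : IsMinRankAvailable r A x) (hy : IsMinRankAvailable r B y)
    (hAB : A ⊆ B) : r x ≤ r y :=
  hx.2 y fun hyA => hy.1 (hAB hyA)

theorem mem_insert_of_subset [DecidableEq α] (hr : Injective r) (hx : IsMinRankAvailable r A x)
    (hy : IsMinRankAvailable r B y) (hAB : A ⊆ B) : x ∈ insert y B := by
  by_cases hxB : x ∈ B
  · exact Finset.mem_insert_of_mem hxB
  · rw [hr (le_antisymm (hx.rank_le_of_subset hy hAB) (hy.2 x hxB))]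
    exact Finset.mem_insert_self y B

end IsMinRankAvailable

theorem weight_le_of_rank_le [Preorder γ] {r : α → β} (hr : Injective r) {w : α → γ}
    (hwr : ∀ j j', r j < r j' → w j' ≤ w j) {x y : α} (hxy : r x ≤ r y) : w y ≤ w x := by
  rcases hxy.lt_or_eq with hlt | heq
  · exact hwr x y hlt
  · rw [hr heq]

theorem picked_subset_of_sublist [DecidableEq α] {r : ι → α → β} (hr : ∀ i, Injective (r i))
    {μ : ι → List ι → α} {μset : List ι → Finset α}
    (hsetS : ∀ (S : List ι) (i : ι), S.Nodup → i ∉ S → μset (S ++ [i]) = insert (μ i S) (μset S))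
    (hμ : ∀ (i : ι) (S : List ι), S.Nodup → i ∉ S → IsMinRankAvailable (r i) (μset S) (μ i S))
    {S Shat : List ι} (hS : S.Nodup) (hsub : Shat.Sublist S) : μset Shat ⊆ μset S := by
  induction S using List.reverseRecOn generalizing Shat with
  | nil => rw [List.sublist_nil.mp hsub]
  | append_singleton S a ih =>
    obtain ⟨hS', haS'⟩ : S.Nodup ∧ a ∉ S := by simpa using List.nodup_append'.mp hS
    obtain ⟨T, last, rfl, hT, hlast⟩ := List.sublist_append_iff.mp hsub
    have hTS := ih hS' hT
    rw [hsetS S a hS' haS']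
    rcases List.sublist_singleton.mp hlast with rfl | rfl
    · simpa using hTS.trans (Finset.subset_insert _ _)
    · have haT : a ∉ T := fun h => haS' (hT.subset h)
      rw [hsetS T a (hT.nodup hS') haT, Finset.insert_subset_iff]
      exact ⟨(hμ a T (hT.nodup hS') haT).mem_insert_of_subset (hr a) (hμ a S hS' haS') hTS,
        hTS.trans (Finset.subset_insert _ _)⟩

theorem stmt5_general {n : ℕ}
    (r : Fin n → Fin n → ℕ) (hr : ∀ i, Function.Injective (r i))
    (w : Fin n → Fin n → ℝ)
    (hwr : ∀ i j j', r i j < r i j' → w i j' ≤ w i j)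
    (μ : Fin n → List (Fin n) → Fin n) (μset : List (Fin n) → Finset (Fin n))
    (hsetS : ∀ (S : List (Fin n)) (i : Fin n), S.Nodup → i ∉ S →
        μset (S ++ [i]) = insert (μ i S) (μset S))
    (hμ : ∀ (i : Fin n) (S : List (Fin n)), S.Nodup → i ∉ S →
        μ i S ∉ μset S ∧ ∀ j, j ∉ μset S → r i (μ i S) ≤ r i j) :
    ∀ (i : Fin n) (S Shat : List (Fin n)), S.Nodup → i ∉ S → Shat.Sublist S →
      μset Shat ⊆ μset S ∧ w i (μ i S) ≤ w i (μ i Shat) := by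
  intro i S Shat hS hiS hsub
  have hpicked := picked_subset_of_sublist hr hsetS hμ hS hsub
  have hrank : r i (μ i Shat) ≤ r i (μ i S) :=
    IsMinRankAvailable.rank_le_of_subset (hμ i Shat (hsub.nodup hS) fun h => hiS (hsub.subset h))
      (hμ i S hS hiS) hpicked
  exact ⟨hpicked, weight_le_of_rank_le (hr i) (hwr i) hrank⟩

/-- OSM valuations are monotone. Here `μ i S` is the item picked by agent
`i` when acting right after the subsequence `S`, and `μset S` is the set of items
picked by the agents of `S` acting in order; these are characterized by the stated
hypotheses (each agent picks her minimum-rank still-available item). The conclusion: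
if `Shat` is an ordered subsequence of `S` then `μset Shat ⊆ μset S` and hence
`v i Shat = w i (μ i Shat) ≥ w i (μ i S) = v i S`. -/
theorem stmt5 {n : ℕ}
    (r : Fin n → Fin n → ℕ) (hr : ∀ i, Function.Injective (r i))
    (w : Fin n → Fin n → ℝ) (hw0 : ∀ i j, 0 ≤ w i j)
    (hwr : ∀ i j j', r i j < r i j' → w i j' ≤ w i j)
    (μ : Fin n → List (Fin n) → Fin n) (μset : List (Fin n) → Finset (Fin n))
    (hset0 : μset [] = ∅)
    (hsetS : ∀ (S : List (Fin n)) (i : Fin n), S.Nodup → i ∉ S →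
        μset (S ++ [i]) = insert (μ i S) (μset S))
    (hμ : ∀ (i : Fin n) (S : List (Fin n)), S.Nodup → i ∉ S →
        μ i S ∉ μset S ∧ ∀ j, j ∉ μset S → r i (μ i S) ≤ r i j) :
    ∀ (i : Fin n) (S Shat : List (Fin n)), S.Nodup → i ∉ S → Shat.Sublist S →
      μset Shat ⊆ μset S ∧ w i (μ i S) ≤ w i (μ i Shat) :=
  stmt5_general r hr w hwr μ μset hsetS hμ
end

section
/- For the independent-set valuations (OSI) defined from an undirected graph G on vertex set [n] (v_i(S) = 1 if the vertices of S together with i form an independent set in G, else 0): (a) these valuations are monotone; (b) for any full action sequence π, SW(π) equals the length of the maximal prefix of π whose vertex set is an independent set in G; and (c) the maximum social welfare over all action sequences equals the maximum size of an independent set of G. -/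
/-- `s` is an independent set of `G`. -/
def IndepSet {n : ℕ} (G : SimpleGraph (Fin n)) (s : Finset (Fin n)) : Prop :=
  ∀ a ∈ s, ∀ b ∈ s, ¬ G.Adj a b

open Finset

section

variable {n : ℕ} {G : SimpleGraph (Fin n)} {π : List (Fin n)}

theorem IndepSet.mono {s t : Finset (Fin n)} (hst : s ⊆ t) (ht : IndepSet G t) : IndepSet G s :=
  fun a ha b hb => ht a (hst ha) b (hst hb)

theorem indepSet_empty (G : SimpleGraph (Fin n)) : IndepSet G ∅ := by
  simp [IndepSet]

open Classical in
noncomputable def osiValuation (G : SimpleGraph (Fin n)) (i : Fin n) (S : List (Fin n)) : ℝ :=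
  if IndepSet G (insert i S.toFinset) then 1 else 0

theorem eq_osiValuation {v : Fin n → List (Fin n) → ℝ}
    (hv1 : ∀ i S, IndepSet G (insert i S.toFinset) → v i S = 1)
    (hv0 : ∀ i S, ¬ IndepSet G (insert i S.toFinset) → v i S = 0) :
    v = osiValuation G := by
  funext i S
  unfold osiValuation
  split_ifs with h
  exacts [hv1 i S h, hv0 i S h]

theorem osiValuation_antitone {i : Fin n} {S S' : List (Fin n)} (h : S'.Sublist S) :
    osiValuation G i S ≤ osiValuation G i S' := by
  unfold osiValuation
  split_ifs with hS hS'
  · rfl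
  · refine absurd (hS.mono (insert_subset_insert _ fun x hx => ?_)) hS'
    simpa using h.subset (List.mem_toFinset.mp hx)
  · exact zero_le_one
  · rfl

theorem prefixBefore_eq_take (π : List (Fin n)) (i : Fin n) :
    prefixBefore π i = π.take (π.idxOf i) := by
  simp only [prefixBefore, List.takeWhile_eq_take_findIdx_not, bne, Bool.not_not, List.idxOf]

theorem IsSeq.length_eq (hπ : IsSeq π) : π.length = n := by
  have : π.toFinset = univ := eq_univ_of_forall fun i => List.mem_toFinset.mpr (hπ.2 i)
  rw [← List.toFinset_card_of_nodup hπ.1, this, card_univ, Fintype.card_fin]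

theorem IsSeq.card_toFinset_take (hπ : IsSeq π) {k : ℕ} (hk : k ≤ n) :
    (π.take k).toFinset.card = k := by
  rw [List.toFinset_card_of_nodup (hπ.1.sublist (List.take_sublist k π)), List.length_take,
    hπ.length_eq, min_eq_left hk]

theorem isSeq_toList_append_compl (s : Finset (Fin n)) : IsSeq (s.toList ++ sᶜ.toList) := by
  refine ⟨s.nodup_toList.append sᶜ.nodup_toList fun x hx hx' => ?_, fun i => ?_⟩
  · exact mem_compl.mp (mem_toList.mp hx') (mem_toList.mp hx)
  · simp only [List.mem_append, mem_toList, mem_compl]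
    exact em _

section IndepPrefix

open Classical

noncomputable def indepPrefixLength (G : SimpleGraph (Fin n)) (π : List (Fin n)) : ℕ :=
  Nat.findGreatest (fun m => IndepSet G (π.take m).toFinset) n

theorem indepPrefixLength_le : indepPrefixLength G π ≤ n :=
  Nat.findGreatest_le n

theorem indepSet_take_indepPrefixLength : IndepSet G (π.take (indepPrefixLength G π)).toFinset :=
  Nat.findGreatest_spec (P := fun m => IndepSet G (π.take m).toFinset) (Nat.zero_le n)
    (by simpa using indepSet_empty G)

theorem le_indepPrefixLength {m : ℕ} (hm : m ≤ n) (h : IndepSet G (π.take m).toFinset) :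
    m ≤ indepPrefixLength G π :=
  Nat.le_findGreatest hm h

theorem indepSet_take_iff {m : ℕ} (hm : m ≤ n) :
    IndepSet G (π.take m).toFinset ↔ m ≤ indepPrefixLength G π := by
  refine ⟨le_indepPrefixLength hm, fun h => ?_⟩
  refine (indepSet_take_indepPrefixLength (π := π)).mono fun x hx => ?_
  simpa using (List.take_prefix_take_left h).subset (List.mem_toFinset.mp hx)

end IndepPrefix

theorem osiValuation_prefixBefore (hπ : IsSeq π) (i : Fin n) :
    osiValuation G i (prefixBefore π i) =
      if i ∈ (π.take (indepPrefixLength G π)).toFinset then 1 else 0 := by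
  have hi := hπ.2 i
  have hlt : π.idxOf i < n := (List.idxOf_lt_length_of_mem hi).trans_eq hπ.length_eq
  have hins : insert i (π.take (π.idxOf i)).toFinset = (π.take (π.idxOf i + 1)).toFinset := by
    rw [List.take_add_one, List.getElem?_idxOf hi, List.toFinset_append]
    simp
  simp only [osiValuation, prefixBefore_eq_take, hins, indepSet_take_iff hlt, List.mem_toFinset,
    List.mem_take_iff_idxOf_lt hi, Nat.add_one_le_iff]

theorem SW_osiValuation (hπ : IsSeq π) : SW (osiValuation G) π = indepPrefixLength G π := by
  rw [SW, Fintype.sum_congr _ _ (osiValuation_prefixBefore hπ), sum_boole, filter_mem_eq_inter,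
    univ_inter, hπ.card_toFinset_take indepPrefixLength_le]

open Classical in
noncomputable def indepNumber (G : SimpleGraph (Fin n)) : ℕ :=
  (univ.powerset.filter fun s => IndepSet G s).sup card

theorem IndepSet.card_le_indepNumber {s : Finset (Fin n)} (hs : IndepSet G s) :
    s.card ≤ indepNumber G := by
  classical
  exact le_sup (mem_filter.mpr ⟨mem_powerset.mpr (subset_univ s), hs⟩)

theorem exists_indepSet_card_eq_indepNumber (G : SimpleGraph (Fin n)) :
    ∃ s, IndepSet G s ∧ s.card = indepNumber G := by
  classical
  obtain ⟨s, hs, hsup⟩ := exists_mem_eq_sup _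
    ⟨∅, mem_filter.mpr ⟨empty_mem_powerset _, indepSet_empty G⟩⟩ card
  exact ⟨s, (mem_filter.mp hs).2, hsup.symm⟩

theorem SW_osiValuation_le (hπ : IsSeq π) : SW (osiValuation G) π ≤ indepNumber G := by
  rw [SW_osiValuation hπ, Nat.cast_le, ← hπ.card_toFinset_take indepPrefixLength_le]
  exact indepSet_take_indepPrefixLength.card_le_indepNumber

theorem exists_SW_osiValuation_eq (G : SimpleGraph (Fin n)) :
    ∃ π, IsSeq π ∧ SW (osiValuation G) π = indepNumber G := by
  obtain ⟨s, hs, hcard⟩ := exists_indepSet_card_eq_indepNumber G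
  have hπ := isSeq_toList_append_compl s
  refine ⟨_, hπ, le_antisymm (SW_osiValuation_le hπ) ?_⟩
  have htake : (s.toList ++ sᶜ.toList).take s.card = s.toList :=
    List.take_left' (length_toList s)
  rw [SW_osiValuation hπ, Nat.cast_le, ← hcard]
  refine le_indepPrefixLength (card_le_univ s |>.trans_eq (Fintype.card_fin n)) ?_
  rwa [htake, toList_toFinset]

end

open Classical in
theorem stmt9 {n : ℕ} (G : SimpleGraph (Fin n))
    (v : Fin n → List (Fin n) → ℝ)
    (hv1 : ∀ (i : Fin n) (S : List (Fin n)),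
        IndepSet G (insert i S.toFinset) → v i S = 1)
    (hv0 : ∀ (i : Fin n) (S : List (Fin n)),
        ¬ IndepSet G (insert i S.toFinset) → v i S = 0) :
    (∀ (i : Fin n) (S S' : List (Fin n)), S'.Sublist S → v i S ≤ v i S') ∧
    (∀ π, IsSeq π → ∃ k ≤ n, SW v π = k ∧ IndepSet G (π.take k).toFinset ∧
        ∀ m ≤ n, IndepSet G (π.take m).toFinset → m ≤ k) ∧
    ((∃ π, IsSeq π ∧ SW v π =
        ((Finset.univ.powerset.filter fun s => IndepSet G s).sup Finset.card : ℕ)) ∧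
      ∀ π, IsSeq π → SW v π ≤
        ((Finset.univ.powerset.filter fun s => IndepSet G s).sup Finset.card : ℕ)) := by
  obtain rfl := eq_osiValuation hv1 hv0
  refine ⟨fun i S S' h => osiValuation_antitone h, fun π hπ => ?_,
    exists_SW_osiValuation_eq G, fun π hπ => SW_osiValuation_le hπ⟩
  exact ⟨indepPrefixLength G π, indepPrefixLength_le, SW_osiValuation hπ,
    indepSet_take_indepPrefixLength, fun m hm h => le_indepPrefixLength hm h⟩
end

section
/- Pareto characterization for matchings: given a complete bipartite graph K_{n,n} with strict rankings r_i of the n items for each of n agents, a perfect matching μ can be produced by a serial dictatorship (some action sequence, with each agent picking her top-ranked available item) if and only if μ is Pareto-optimal, i.e., there is no perfect matching μ' with r_i(μ'_i) ≤ r_i(μ_i) for all agents i and strict inequality for at least one agent. -/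
/-- The serial dictatorship with ordering `π` produces the perfect matching `μ`:
every agent's item is her top-ranked item among those not taken by her predecessors. -/
def ProducedM {n : ℕ} (r : Fin n → Fin n → ℕ) (π : List (Fin n))
    (μ : Equiv.Perm (Fin n)) : Prop :=
  ∀ i j : Fin n, j ∉ (prefixBefore π i).map (fun k => μ k) → r i (μ i) ≤ r i j

/-- `μ` is Pareto-optimal w.r.t. the strict rankings `r`. -/
def ParetoOptM {n : ℕ} (r : Fin n → Fin n → ℕ) (μ : Equiv.Perm (Fin n)) : Prop :=
  ¬ ∃ μ' : Equiv.Perm (Fin n),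
      (∀ i, r i (μ' i) ≤ r i (μ i)) ∧ ∃ i, r i (μ' i) < r i (μ i)

/-!
If `μ'` makes no agent worse off than a matching `μ` produced by a serial dictatorship, then by
induction along the ordering every agent's `μ'`-item was still available when she picked, so by
strictness of her ranking it is her `μ`-item; hence no Pareto improvement exists.

Conversely, if `μ` is Pareto-optimal, every nonempty set `S` of agents contains an agent who
prefers her own item to those of the other agents of `S`: otherwise every agent of `S` points to
one whose item she prefers, following the pointers leads into a cycle, and trading items along
the cycles is a Pareto improvement. Letting such an agent pick first and recursing on the
remaining agents gives an ordering whose serial dictatorship produces `μ`.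
-/

open Function

theorem Function.exists_iterate_mem_periodicPts {α : Type*} [Finite α] (f : α → α) (x : α) :
    ∃ m, f^[m] x ∈ periodicPts f := by
  obtain ⟨a, b, hab, heq⟩ := Finite.exists_ne_map_eq_of_infinite (fun m : ℕ => f^[m] x)
  wlog hlt : a < b generalizing a b
  · exact this b a hab.symm heq.symm (by omega)
  refine ⟨a, mk_mem_periodicPts (Nat.sub_pos_of_lt hlt) ?_⟩
  change f^[b - a] (f^[a] x) = f^[a] x
  rw [← iterate_add_apply, Nat.sub_add_cancel hlt.le, heq]

section

variable {n : ℕ} {r : Fin n → Fin n → ℕ} {μ : Equiv.Perm (Fin n)}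

lemma prefixBefore_cons_of_ne {a i : Fin n} (h : a ≠ i) (π : List (Fin n)) :
    prefixBefore (a :: π) i = a :: prefixBefore π i := by
  simp [prefixBefore, h]

lemma notMem_prefixBefore_self (π : List (Fin n)) (i : Fin n) :
    i ∉ prefixBefore π i := fun h => by
  simpa using List.mem_takeWhile_imp h

lemma idxOf_lt_of_mem_prefixBefore {π : List (Fin n)} {i k : Fin n}
    (hk : k ∈ prefixBefore π i) : π.idxOf k < π.idxOf i := by
  induction π with
  | nil => simp [prefixBefore] at hk
  | cons a π ih =>
    by_cases hai : a = i
    · simp [prefixBefore, hai] at hk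
    rw [prefixBefore_cons_of_ne hai, List.mem_cons] at hk
    rw [List.idxOf_cons_ne π hai]
    by_cases hka : a = k
    · rw [List.idxOf_cons_eq π hka]; exact Nat.succ_pos _
    · rw [List.idxOf_cons_ne π hka]
      exact Nat.succ_lt_succ (ih (hk.resolve_left (Ne.symm hka)))

theorem ProducedM.eq_of_forall_le (hr : ∀ i, Injective (r i)) {π : List (Fin n)}
    {μ' : Equiv.Perm (Fin n)} (hμ : ProducedM r π μ) (hle : ∀ i, r i (μ' i) ≤ r i (μ i)) :
    μ' = μ := by
  suffices ∀ m i, π.idxOf i = m → μ' i = μ i from Equiv.ext fun i => this _ i rfl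
  intro m
  induction m using Nat.strong_induction_on with
  | _ m ih =>
    rintro i rfl
    have hfree : μ' i ∉ (prefixBefore π i).map (fun k => μ k) := by
      rintro hmem
      obtain ⟨k, hk, hki⟩ := List.mem_map.mp hmem
      rw [← ih _ (idxOf_lt_of_mem_prefixBefore hk) k rfl, μ'.injective.eq_iff] at hki
      exact notMem_prefixBefore_self π i (hki ▸ hk)
    exact hr i ((hle i).antisymm (hμ i _ hfree))

theorem ParetoOptM.apply_eq_of_mem_periodicPts (hpo : ParetoOptM r μ) {f : Fin n → Fin n}
    (hf : ∀ i, f i ≠ i → r i (μ (f i)) < r i (μ i)) {c : Fin n} (hc : c ∈ periodicPts f) :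
    f c = c := by
  classical
  by_contra hfc
  let σ : Equiv.Perm (Fin n) := Equiv.Perm.ofSubtype ((bijOn_periodicPts f).equiv f)
  have hσ : ∀ i, σ i = if i ∈ periodicPts f then f i else i := by
    intro i
    split_ifs with hi
    · exact Equiv.Perm.ofSubtype_apply_of_mem _ hi
    · exact Equiv.Perm.ofSubtype_apply_of_not_mem _ hi
  refine hpo ⟨σ.trans μ, fun i => ?_, c, ?_⟩
  · rw [Equiv.trans_apply, hσ]
    split_ifs
    · by_cases hfi : f i = i
      · rw [hfi]
      · exact (hf i hfi).le
    · exact le_rfl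
  · rw [Equiv.trans_apply, hσ, if_pos hc]
    exact hf c hfc

theorem ParetoOptM.exists_forall_le (hpo : ParetoOptM r μ) {S : Finset (Fin n)}
    (hS : S.Nonempty) :
    ∃ i ∈ S, ∀ j ∈ S, r i (μ i) ≤ r i (μ j) := by
  classical
  by_contra! hcon
  choose! g hgS hglt using hcon
  let f : Fin n → Fin n := fun i => if i ∈ S then g i else i
  have hfS : Set.MapsTo f S S := fun i (hi : i ∈ S) => by simpa [f, hi] using hgS i hi
  have hf : ∀ i, f i ≠ i → r i (μ (f i)) < r i (μ i) := fun i hfi => by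
    by_cases hi : i ∈ S
    · simpa [f, hi] using hglt i hi
    · simp [f, hi] at hfi
  obtain ⟨c₀, hc₀⟩ := hS
  obtain ⟨m, hm⟩ := exists_iterate_mem_periodicPts f c₀
  have hcS : f^[m] c₀ ∈ S := hfS.iterate m hc₀
  have hfix : g (f^[m] c₀) = f^[m] c₀ := by
    simpa [f, hcS] using hpo.apply_eq_of_mem_periodicPts hf hm
  exact (hglt _ hcS).ne (by rw [hfix])

theorem exists_list_forall_le_of_forall_finset
    (htop : ∀ S : Finset (Fin n), S.Nonempty →
      ∃ i ∈ S, ∀ j ∈ S, r i (μ i) ≤ r i (μ j))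
    (S : Finset (Fin n)) :
    ∃ π : List (Fin n), π.Nodup ∧ (∀ i, i ∈ π ↔ i ∈ S) ∧
      ∀ i k, k ∈ π → k ∉ prefixBefore π i → r i (μ i) ≤ r i (μ k) := by
  classical
  induction S using Finset.strongInduction with
  | _ S ih =>
    rcases S.eq_empty_or_nonempty with rfl | hS
    · exact ⟨[], by simp⟩
    obtain ⟨a, haS, ha⟩ := htop S hS
    obtain ⟨π, hnd, hmem, hπ⟩ := ih (S.erase a) (Finset.erase_ssubset haS)
    have haπ : a ∉ π := fun h => by simpa using (hmem a).mp h
    have hmem' : ∀ i, i ∈ a :: π ↔ i ∈ S := fun i => by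
      rw [List.mem_cons, hmem, Finset.mem_erase]
      by_cases hia : i = a
      · simp [hia, haS]
      · simp [hia]
    refine ⟨a :: π, List.nodup_cons.mpr ⟨haπ, hnd⟩, hmem', fun i k hk hki => ?_⟩
    by_cases hai : a = i
    · exact hai ▸ ha k ((hmem' k).mp hk)
    rw [prefixBefore_cons_of_ne hai, List.mem_cons, not_or] at hki
    exact hπ i k ((List.mem_cons.mp hk).resolve_left hki.1) hki.2

end

/-- a perfect matching can be produced by a serial dictatorship iff it
is Pareto-optimal. -/
theorem stmt11 {n : ℕ} (r : Fin n → Fin n → ℕ) (hr : ∀ i, Function.Injective (r i))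
    (μ : Equiv.Perm (Fin n)) :
    (∃ π, IsSeq π ∧ ProducedM r π μ) ↔ ParetoOptM r μ := by
  constructor
  · rintro ⟨π, -, hμ⟩ ⟨μ', hle, i, hlt⟩
    rw [hμ.eq_of_forall_le hr hle] at hlt
    exact lt_irrefl _ hlt
  · intro hpo
    obtain ⟨π, hnd, hmem, hπ⟩ :=
      exists_list_forall_le_of_forall_finset (fun _ => hpo.exists_forall_le) Finset.univ
    have hall : ∀ i, i ∈ π := fun i => (hmem i).mpr (Finset.mem_univ i)
    refine ⟨π, ⟨hnd, hall⟩, fun i j hj => ?_⟩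
    have hfree : μ.symm j ∉ prefixBefore π i := fun h =>
      hj (List.mem_map.mpr ⟨_, h, μ.apply_symm_apply j⟩)
    simpa using hπ i (μ.symm j) (hall _) hfree
end

section
/- Non-truthfulness witness for greedy OSM: consider 2 agents and 2 items. True profile v: w(1,1)=1+ε, w(1,2)=1, w(2,1)=1, w(2,2)=1−ε; the greedy algorithm (repeatedly pick the agent with the highest-value available item) matches agent 1 to item 1 and agent 2 to item 2. Misreported profile (v'_1, v_2): w'(1,1)=1−ε, w'(1,2)=0; greedy matches agent 2 to item 1 and agent 1 to item 2. Then v_1(first outcome for agent 1) + v'_1(second outcome for agent 1) = (1+ε) + 0 < 1 + (1−ε) = v_1(second) + v'_1(first) for ε < 1/2, violating the 2-cycle monotonicity condition; hence the greedy matching algorithm admits no truthful payment scheme. -/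
/-!
With a unique maximum-weight entry, the greedy rule forces the matching: on the true profile
agent 0 takes item 0 (weight `1 + ε`), and after agent 0 misreports, agent 1 takes item 0
(weight `1`), leaving item 1 to agent 0. The two outcomes violate 2-cycle monotonicity since
`(1 + ε) + 0 < 1 + (1 - ε)`, while adding the truthfulness inequalities for the deviation and
for its reversal shows that every truthful payment scheme forces 2-cycle monotonicity.
-/

section Greedy

variable {α β γ : Type*} [LinearOrder γ]

theorem apply_eq_of_forall_lt_of_exists_forall_le {W : α → β → γ} {f : α → β} {a : α} {b : β}
    (hmax : ∀ a' b', (a', b') ≠ (a, b) → W a' b' < W a b)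
    (hf : ∃ i, ∀ a' b', W a' b' ≤ W i (f i)) : f a = b := by
  obtain ⟨i, hi⟩ := hf
  have hib : (i, f i) = (a, b) := by
    by_contra hne
    exact (hmax i (f i) hne).not_ge (hi a b)
  obtain ⟨rfl, hfi⟩ := Prod.mk.inj hib
  exact hfi

end Greedy

section Truthfulness

variable {ι β : Type*} [DecidableEq ι]

/-- `p i W` is the payment charged to agent `i` on the reported profile `W`. -/
def IsTruthfulWith (M : (ι → β → ℝ) → ι → β) (p : ι → (ι → β → ℝ) → ℝ) : Prop :=
  ∀ (W : ι → β → ℝ) (i : ι) (Wi' : β → ℝ),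
    W i (M (Function.update W i Wi') i) - p i (Function.update W i Wi') ≤ W i (M W i) - p i W

theorem IsTruthfulWith.cycle_monotone {M : (ι → β → ℝ) → ι → β} {p : ι → (ι → β → ℝ) → ℝ}
    (hp : IsTruthfulWith M p) (W : ι → β → ℝ) (i : ι) (Wi' : β → ℝ) :
    W i (M (Function.update W i Wi') i) + Wi' (M W i)
      ≤ W i (M W i) + Wi' (M (Function.update W i Wi') i) := by
  have h_forward := hp W i Wi'
  have h_back := hp (Function.update W i Wi') i (W i)
  simp only [Function.update_idem, Function.update_eq_self, Function.update_self] at h_back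
  linarith

end Truthfulness

/-- non-truthfulness witness for greedy OSM on 2 agents and 2 items.
`M` is the greedy matching algorithm: for each weight profile it outputs a perfect
matching (a bijection from agents to items) in which some agent is matched to an item
of globally maximum weight (the 2×2 greedy first places the maximum-weight pair).
For the true profile `w` and the profile `w'` in which agent 0 misreports, the
2-cycle monotonicity condition is violated, hence no payment scheme makes `M`
truthful. -/
theorem stmt19 (ε : ℝ) (hε : 0 < ε) (hε2 : ε < 1 / 2)
    (M : (Fin 2 → Fin 2 → ℝ) → (Fin 2 → Fin 2))
    (hM : ∀ W, Function.Bijective (M W) ∧ ∃ i, ∀ a b, W a b ≤ W i (M W i))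
    (w w' : Fin 2 → Fin 2 → ℝ)
    (hw : w = ![![1 + ε, 1], ![1, 1 - ε]])
    (hw' : w' = ![![1 - ε, 0], ![1, 1 - ε]]) :
    (w 0 (M w 0) + w' 0 (M w' 0) < w 0 (M w' 0) + w' 0 (M w 0)) ∧
      ¬ ∃ p : Fin 2 → (Fin 2 → Fin 2 → ℝ) → ℝ,
          ∀ (W : Fin 2 → Fin 2 → ℝ) (i : Fin 2) (Wi' : Fin 2 → ℝ),
            W i (M (Function.update W i Wi') i) - p i (Function.update W i Wi')
              ≤ W i (M W i) - p i W := by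
  have hMw : M w 0 = 0 := apply_eq_of_forall_lt_of_exists_forall_le
    (by intro a b h; fin_cases a <;> fin_cases b <;> simp_all <;> linarith) (hM w).2
  have hMw'1 : M w' 1 = 0 := apply_eq_of_forall_lt_of_exists_forall_le
    (by intro a b h; fin_cases a <;> fin_cases b <;> simp_all) (hM w').2
  have hMw'0 : M w' 0 = 1 := by
    have h01 : M w' 0 ≠ M w' 1 := (hM w').1.1.ne (by decide)
    omega
  have hdev : Function.update w 0 (w' 0) = w' := by
    funext a
    fin_cases a <;> simp [hw, hw']
  have hcycle : w 0 (M w 0) + w' 0 (M w' 0) < w 0 (M w' 0) + w' 0 (M w 0) := by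
    rw [hMw, hMw'0, hw, hw']
    norm_num
    linarith
  refine ⟨hcycle, fun ⟨p, hp⟩ => ?_⟩
  have hmono := IsTruthfulWith.cycle_monotone hp w 0 (w' 0)
  rw [hdev] at hmono
  linarith
end
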